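/- Under the covariate-adjusted β-model, with T_ij, V, V_{γβ} and s_ij as in the context and V invertible, the covariance matrix of the random vector Σ_{i<j} s_ij equals H(β*,γ*) := Σ_{i<j} μ′(π*_ij) z_ij z_ij^⊤ − V_{γβ} V^{−1} V_{γβ}^⊤. -/

import Mathlib

open MeasureTheory ProbabilityTheory Real Filter Finset Matrix BoundedContinuousFunction

noncomputable section

/-- The logistic function `μ(x) = eˣ/(1+eˣ)`. -/
def mu (x : ℝ) : ℝ := exp x / (1 + exp x)

/-- First derivative `μ′(x) = eˣ/(1+eˣ)²`. -/
def mu' (x : ℝ) : ℝ := exp x / (1 + exp x) ^ 2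

/-- Second derivative `μ″(x) = eˣ(1-eˣ)/(1+eˣ)³`. -/
def mu'' (x : ℝ) : ℝ := exp x * (1 - exp x) / (1 + exp x) ^ 3

/-- `z_* = max_{i<j} ‖z_ij‖_∞`. -/
def zsup {n p : ℕ} (z : Fin n → Fin n → Fin p → ℝ) : ℝ := ⨆ i, ⨆ j, ⨆ t, |z i j t|

/-- the linear predictor `π_ij = β_i + β_j + z_ij^⊤ γ`. -/
def linpred {n p : ℕ} (z : Fin n → Fin n → Fin p → ℝ) (β : Fin n → ℝ) (γ : Fin p → ℝ)
    (i j : Fin n) : ℝ := β i + β j + ∑ t, z i j t * γ t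

/-- the degree `d_i = ∑_{j ≠ i} a_ij`. -/
def degree {n : ℕ} {Ω : Type*} (a : Fin n → Fin n → Ω → ℝ) (i : Fin n) (ω : Ω) : ℝ :=
  ∑ j ∈ univ.erase i, a i j ω

/-- `v_ii = ∑_{j≠i} μ′(π*_ij)`. -/
def vdiag {n p : ℕ} (z : Fin n → Fin n → Fin p → ℝ) (βs : Fin n → ℝ) (γs : Fin p → ℝ)
    (i : Fin n) : ℝ := ∑ j ∈ univ.erase i, mu' (linpred z βs γs i j)

/-- All model assumptions of the covariate-adjusted β-model
(without differentially private release). -/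
structure BetaModel {Ω : Type*} [MeasurableSpace Ω] (P : Measure Ω) (n p : ℕ)
    (z : Fin n → Fin n → Fin p → ℝ) (βs : Fin n → ℝ) (γs : Fin p → ℝ)
    (a : Fin n → Fin n → Ω → ℝ) : Prop where
  hzsym : ∀ i j, z i j = z j i
  hasym : ∀ i j, a i j = a j i
  hadiag : ∀ i, a i i = 0
  hameas : ∀ i j, Measurable (a i j)
  ha01 : ∀ i j ω, a i j ω = 0 ∨ a i j ω = 1
  haBern : ∀ i j, i ≠ j → P {ω | a i j ω = 1} = ENNReal.ofReal (mu (linpred z βs γs i j))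
  hindep : iIndepFun
    (fun q : {q : Fin n × Fin n // q.1 < q.2} => a q.1.1 q.1.2) P

end

noncomputable section

/-- the Fisher information matrix `V` of `β`. -/
def Vmat {n p : ℕ} (z : Fin n → Fin n → Fin p → ℝ) (β : Fin n → ℝ) (γ : Fin p → ℝ) :
    Matrix (Fin n) (Fin n) ℝ :=
  Matrix.of fun i j =>
    if i = j then ∑ l ∈ univ.erase i, mu' (linpred z β γ i l) else mu' (linpred z β γ i j)

/-- the `p×n` matrix `V_{γβ}` with `(V_{γβ})_{tj} = ∑_{i≠j} z_ijt μ′(π*_ij)`. -/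
def Vgb {n p : ℕ} (z : Fin n → Fin n → Fin p → ℝ) (β : Fin n → ℝ) (γ : Fin p → ℝ) :
    Matrix (Fin p) (Fin n) ℝ :=
  Matrix.of fun t j => ∑ i ∈ univ.erase j, z i j t * mu' (linpred z β γ i j)

/-- `T_ij ∈ ℝⁿ`: one in the `i`-th and `j`-th entries and zero elsewhere. -/
def Tvec {n : ℕ} (i j : Fin n) : Fin n → ℝ := fun l => if l = i ∨ l = j then 1 else 0

/-- `s_ij = (a_ij − E a_ij)(z_ij − V_{γβ} V⁻¹ T_ij) ∈ ℝᵖ`. -/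
def sij {n p : ℕ} {Ω : Type*} (z : Fin n → Fin n → Fin p → ℝ) (βs : Fin n → ℝ)
    (γs : Fin p → ℝ) (a : Fin n → Fin n → Ω → ℝ) (i j : Fin n) (ω : Ω) (t : Fin p) : ℝ :=
  (a i j ω - mu (linpred z βs γs i j)) *
    (z i j t - (Vgb z βs γs * (Vmat z βs γs)⁻¹).mulVec (Tvec i j) t)

/-- `S = ∑_{i<j} s_ij`. -/
def Ssum {n p : ℕ} {Ω : Type*} (z : Fin n → Fin n → Fin p → ℝ) (βs : Fin n → ℝ)
    (γs : Fin p → ℝ) (a : Fin n → Fin n → Ω → ℝ) (t : Fin p) (ω : Ω) : ℝ :=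
  ∑ i, ∑ j ∈ univ.filter (fun j => i < j), sij z βs γs a i j ω t


/-! Write `S = ∑_{i<j} (a_ij − E a_ij) c_ij` with the deterministic vectors
`c_ij = z_ij − V_{γβ} V⁻¹ T_ij`. Distinct edges are independent, so the covariance of `S` is
`∑_{i<j} Var(a_ij) c_ij c_ijᵀ`, and `Var(a_ij) = μ(1 − μ) = μ′(π*_ij)` for a Bernoulli variable.
Since `V = ∑_{i<j} μ′(π*_ij) T_ij T_ijᵀ` and `V_{γβ} = ∑_{i<j} μ′(π*_ij) z_ij T_ijᵀ`, the `c_ij` are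
the residuals of the weighted least-squares regression of `z_ij` on `T_ij`, and their weighted
scatter matrix is the Schur complement `∑_{i<j} μ′(π*_ij) z_ij z_ijᵀ − V_{γβ} V⁻¹ V_{γβ}ᵀ`. -/

section PairSums

variable {α M : Type*} [Fintype α] [LinearOrder α] [AddCommMonoid M]

theorem sum_sum_filter_lt_eq_sum_subtype (f : α → α → M) :
    ∑ i, ∑ j ∈ univ.filter (fun j => i < j), f i j =
      ∑ q : {q : α × α // q.1 < q.2}, f q.1.1 q.1.2 := by
  rw [← Finset.sum_subtype (univ.filter fun q : α × α => q.1 < q.2) (by simp)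
    (fun q => f q.1 q.2), Finset.sum_finset_product' _ univ (fun i => univ.filter (i < ·))
    (by simp)]

theorem sum_sum_filter_lt_add_swap (f : α → α → M) :
    ∑ i, ∑ j ∈ univ.filter (fun j => i < j), (f i j + f j i) =
      ∑ i, ∑ j ∈ univ.erase i, f i j := by
  have hswap : ∑ i, ∑ j ∈ univ.filter (fun j => i < j), f j i =
      ∑ i, ∑ j ∈ univ.filter (fun j => j < i), f i j := by
    simp only [Finset.sum_filter]
    exact Finset.sum_comm
  have hsplit : ∀ i, ∑ j ∈ univ.erase i, f i j =
      ∑ j ∈ univ.filter (fun j => i < j), f i j + ∑ j ∈ univ.filter (fun j => j < i), f i j := by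
    intro i
    rw [← Finset.sum_union (Finset.disjoint_filter.2 fun j _ h => (lt_asymm h))]
    congr 1
    ext j
    simp [ne_comm, lt_or_lt_iff_ne]
  simp only [Finset.sum_add_distrib, hswap, hsplit]

end PairSums

theorem Matrix.sum_smul_vecMulVec_sub_mul_inv_mulVec {ι m k R : Type*} [Fintype m]
    [DecidableEq m] [CommRing R] (s : Finset ι) (w : ι → R) (x : ι → m → R) (y : ι → k → R)
    {A : Matrix m m R} {B : Matrix k m R}
    (hA : ∑ q ∈ s, w q • vecMulVec (x q) (x q) = A)
    (hB : ∑ q ∈ s, w q • vecMulVec (y q) (x q) = B) (hAdet : IsUnit A.det) :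
    ∑ q ∈ s, w q • vecMulVec (y q - (B * A⁻¹) *ᵥ x q) (y q - (B * A⁻¹) *ᵥ x q) =
      ∑ q ∈ s, w q • vecMulVec (y q) (y q) - B * A⁻¹ * Bᵀ := by
  set F := B * A⁻¹
  have hAt : Aᵀ = A := by
    simp only [← hA, transpose_sum, transpose_smul, transpose_vecMulVec]
  have hBt : ∑ q ∈ s, w q • vecMulVec (x q) (y q) = Bᵀ := by
    simp only [← hB, transpose_sum, transpose_smul, transpose_vecMulVec]
  have hFA : F * A = B := by rw [Matrix.mul_assoc, nonsing_inv_mul _ hAdet, Matrix.mul_one]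
  have hFt : Fᵀ = A⁻¹ * Bᵀ := by rw [transpose_mul, transpose_nonsing_inv, hAt]
  have hexpand : ∀ u v, vecMulVec (v - F *ᵥ u) (v - F *ᵥ u) =
      vecMulVec v v - F * vecMulVec u v - vecMulVec v u * Fᵀ + F * vecMulVec u u * Fᵀ := by
    intro u v
    simp only [vecMulVec_sub, sub_vecMulVec, mul_vecMulVec, vecMulVec_mul, vecMul_transpose]
    abel
  calc ∑ q ∈ s, w q • vecMulVec (y q - F *ᵥ x q) (y q - F *ᵥ x q)
      = ∑ q ∈ s, w q • vecMulVec (y q) (y q) - F * ∑ q ∈ s, w q • vecMulVec (x q) (y q)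
          - (∑ q ∈ s, w q • vecMulVec (y q) (x q)) * Fᵀ
          + F * (∑ q ∈ s, w q • vecMulVec (x q) (x q)) * Fᵀ := by
        simp only [hexpand, smul_add, smul_sub, Finset.sum_add_distrib, Finset.sum_sub_distrib,
          Matrix.mul_sum, Matrix.sum_mul, Matrix.mul_smul, Matrix.smul_mul]
    _ = ∑ q ∈ s, w q • vecMulVec (y q) (y q) - F * Bᵀ := by
        rw [hA, hB, hBt, hFA, hFt, Matrix.mul_assoc]
        abel

def covariateResidual {n p : ℕ} (z : Fin n → Fin n → Fin p → ℝ) (β : Fin n → ℝ)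
    (γ : Fin p → ℝ) (i j : Fin n) : Fin p → ℝ :=
  z i j - (Vgb z β γ * (Vmat z β γ)⁻¹) *ᵥ Tvec i j

section FisherInformation

variable {n p : ℕ} {z : Fin n → Fin n → Fin p → ℝ} (β : Fin n → ℝ) (γ : Fin p → ℝ)

theorem linpred_comm (hz : ∀ i j, z i j = z j i) (i j : Fin n) :
    linpred z β γ i j = linpred z β γ j i := by
  simp only [linpred, hz i j, add_comm (β i)]

theorem Tvec_comm (i j : Fin n) : Tvec i j = Tvec j i := by
  ext l
  simp only [Tvec, or_comm]

theorem Tvec_apply_of_ne {i j : Fin n} (h : i ≠ j) (l : Fin n) :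
    Tvec i j l = (if l = i then 1 else 0) + (if l = j then 1 else 0) := by
  by_cases hi : l = i <;> by_cases hj : l = j <;> simp_all [Tvec]

theorem sum_smul_vecMulVec_Tvec_eq_Vmat (hz : ∀ i j, z i j = z j i) :
    ∑ q : {q : Fin n × Fin n // q.1 < q.2}, mu' (linpred z β γ q.1.1 q.1.2) •
      vecMulVec (Tvec q.1.1 q.1.2) (Tvec q.1.1 q.1.2) = Vmat z β γ := by
  ext k l
  rw [← sum_sum_filter_lt_eq_sum_subtype
    (fun i j => mu' (linpred z β γ i j) • vecMulVec (Tvec i j) (Tvec i j))]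
  simp only [Matrix.sum_apply, Matrix.smul_apply, vecMulVec_apply, smul_eq_mul]
  have hpair : ∀ i, ∀ j ∈ univ.filter (fun j => i < j),
      mu' (linpred z β γ i j) * (Tvec i j k * Tvec i j l) =
        (if i = k then mu' (linpred z β γ i j) * Tvec i j l else 0) +
        (if j = k then mu' (linpred z β γ j i) * Tvec j i l else 0) := by
    intro i j hj
    have hij : i ≠ j := (Finset.mem_filter.1 hj).2.ne
    rw [Tvec_apply_of_ne hij k, linpred_comm β γ hz j i, Tvec_comm j i]
    by_cases hik : i = k <;> by_cases hjk : j = k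
    · exact absurd (hik.trans hjk.symm) hij
    all_goals simp [hik, hjk, eq_comm (a := k)]
  rw [Finset.sum_congr rfl fun i _ => Finset.sum_congr rfl (hpair i),
    sum_sum_filter_lt_add_swap
      (fun i j => if i = k then mu' (linpred z β γ i j) * Tvec i j l else 0)]
  simp only [Finset.sum_ite_irrel, Finset.sum_const_zero, Finset.sum_ite_eq', Finset.mem_univ,
    if_true]
  rcases eq_or_ne k l with rfl | hkl
  · simp [Vmat, Tvec]
  · simp [Vmat, Tvec, hkl, hkl.symm]

theorem sum_smul_vecMulVec_z_Tvec_eq_Vgb (hz : ∀ i j, z i j = z j i) :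
    ∑ q : {q : Fin n × Fin n // q.1 < q.2}, mu' (linpred z β γ q.1.1 q.1.2) •
      vecMulVec (z q.1.1 q.1.2) (Tvec q.1.1 q.1.2) = Vgb z β γ := by
  ext t l
  rw [← sum_sum_filter_lt_eq_sum_subtype
    (fun i j => mu' (linpred z β γ i j) • vecMulVec (z i j) (Tvec i j))]
  simp only [Matrix.sum_apply, Matrix.smul_apply, vecMulVec_apply, smul_eq_mul]
  have hpair : ∀ i, ∀ j ∈ univ.filter (fun j => i < j),
      mu' (linpred z β γ i j) * (z i j t * Tvec i j l) =
        (if j = l then mu' (linpred z β γ i j) * z i j t else 0) +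
        (if i = l then mu' (linpred z β γ j i) * z j i t else 0) := by
    intro i j hj
    have hij : i ≠ j := (Finset.mem_filter.1 hj).2.ne
    rw [Tvec_apply_of_ne hij l, linpred_comm β γ hz j i, hz j i]
    by_cases hil : i = l <;> by_cases hjl : j = l
    · exact absurd (hil.trans hjl.symm) hij
    all_goals simp [hil, hjl, eq_comm (a := l)]
  rw [Finset.sum_congr rfl fun i _ => Finset.sum_congr rfl (hpair i),
    sum_sum_filter_lt_add_swap
      (fun i j => if j = l then mu' (linpred z β γ i j) * z i j t else 0)]
  simp only [Finset.sum_ite_eq', Finset.mem_erase, Vgb, of_apply, mul_comm (z _ l t)]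
  rw [← Finset.sum_filter]
  congr 1
  ext i
  simp [eq_comm]

theorem sum_smul_vecMulVec_covariateResidual (hz : ∀ i j, z i j = z j i)
    (hV : IsUnit (Vmat z β γ).det) :
    ∑ q : {q : Fin n × Fin n // q.1 < q.2}, mu' (linpred z β γ q.1.1 q.1.2) •
      vecMulVec (covariateResidual z β γ q.1.1 q.1.2) (covariateResidual z β γ q.1.1 q.1.2) =
    ∑ q : {q : Fin n × Fin n // q.1 < q.2}, mu' (linpred z β γ q.1.1 q.1.2) •
      vecMulVec (z q.1.1 q.1.2) (z q.1.1 q.1.2) - Vgb z β γ * (Vmat z β γ)⁻¹ * (Vgb z β γ)ᵀ :=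
  Matrix.sum_smul_vecMulVec_sub_mul_inv_mulVec univ _ _ _
    (sum_smul_vecMulVec_Tvec_eq_Vmat β γ hz) (sum_smul_vecMulVec_z_Tvec_eq_Vgb β γ hz) hV

end FisherInformation

section Moments

variable {Ω ι : Type*} [MeasurableSpace Ω] {μ : Measure Ω}

theorem covariance_sum_mul_const_of_pairwise [IsFiniteMeasure μ] [Fintype ι] {X : ι → Ω → ℝ}
    (hX : ∀ i, MemLp (X i) 2 μ) (hcov : Pairwise fun i j => cov[X i, X j; μ] = 0)
    (c d : ι → ℝ) :
    cov[fun ω => ∑ i, X i ω * c i, fun ω => ∑ i, X i ω * d i; μ] =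
      ∑ i, Var[X i; μ] * c i * d i := by
  rw [covariance_fun_sum_fun_sum (fun i => (hX i).mul_const (c i))
    (fun i => (hX i).mul_const (d i))]
  refine Finset.sum_congr rfl fun i _ => ?_
  simp only [covariance_mul_const_left, covariance_mul_const_right]
  rw [Finset.sum_eq_single i (fun j _ hji => by rw [hcov hji.symm]; ring) (by simp),
    covariance_self (hX i).aemeasurable]

variable {X : Ω → ℝ}

theorem memLp_of_forall_eq_zero_or_eq_one [IsFiniteMeasure μ] (hX : Measurable X)
    (h01 : ∀ ω, X ω = 0 ∨ X ω = 1) (q : ENNReal) : MemLp X q μ :=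
  MemLp.of_bound hX.aestronglyMeasurable 1 <| ae_of_all _ fun ω => by
    rcases h01 ω with h | h <;> simp [h]

theorem integral_of_forall_eq_zero_or_eq_one (hX : Measurable X)
    (h01 : ∀ ω, X ω = 0 ∨ X ω = 1) : μ[X] = μ.real {ω | X ω = 1} := by
  have hind : X = Set.indicator {ω | X ω = 1} 1 := by
    ext ω
    rcases h01 ω with h | h <;> simp [h]
  conv_lhs => rw [hind]
  exact integral_indicator_one (hX (measurableSet_singleton 1))

theorem variance_of_forall_eq_zero_or_eq_one [IsProbabilityMeasure μ] (hX : Measurable X)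
    (h01 : ∀ ω, X ω = 0 ∨ X ω = 1) : Var[X; μ] = μ[X] * (1 - μ[X]) := by
  have hsq : X ^ 2 = X := by
    ext ω
    rcases h01 ω with h | h <;> simp [h]
  rw [variance_eq_sub (memLp_of_forall_eq_zero_or_eq_one hX h01 2), hsq]
  ring

end Moments

theorem mu_nonneg (x : ℝ) : 0 ≤ mu x := by
  unfold mu
  positivity

theorem mu'_eq_mu_mul_one_sub_mu (x : ℝ) : mu' x = mu x * (1 - mu x) := by
  unfold mu mu'
  field_simp
  ring

theorem Ssum_eq_sum_pairs {n p : ℕ} {Ω : Type*} (z : Fin n → Fin n → Fin p → ℝ)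
    (βs : Fin n → ℝ) (γs : Fin p → ℝ) (a : Fin n → Fin n → Ω → ℝ) (u : Fin p) :
    Ssum z βs γs a u = fun ω => ∑ q : {q : Fin n × Fin n // q.1 < q.2},
      (a q.1.1 q.1.2 ω - mu (linpred z βs γs q.1.1 q.1.2)) *
        covariateResidual z βs γs q.1.1 q.1.2 u :=
  funext fun ω => sum_sum_filter_lt_eq_sum_subtype fun i j => sij z βs γs a i j ω u

namespace BetaModel

variable {Ω : Type*} [MeasurableSpace Ω] {P : Measure Ω} {n p : ℕ}
  {z : Fin n → Fin n → Fin p → ℝ} {βs : Fin n → ℝ} {γs : Fin p → ℝ} {a : Fin n → Fin n → Ω → ℝ}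
  (h : BetaModel P n p z βs γs a)
include h

theorem memLp_edge [IsFiniteMeasure P] (i j : Fin n) (q : ENNReal) : MemLp (a i j) q P :=
  memLp_of_forall_eq_zero_or_eq_one (h.hameas i j) (h.ha01 i j) q

theorem integral_edge {i j : Fin n} (hij : i ≠ j) : P[a i j] = mu (linpred z βs γs i j) := by
  rw [integral_of_forall_eq_zero_or_eq_one (h.hameas i j) (h.ha01 i j), measureReal_def,
    h.haBern i j hij, ENNReal.toReal_ofReal (mu_nonneg _)]

variable [IsProbabilityMeasure P]

theorem variance_edge {i j : Fin n} (hij : i ≠ j) : Var[a i j; P] = mu' (linpred z βs γs i j) := by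
  rw [variance_of_forall_eq_zero_or_eq_one (h.hameas i j) (h.ha01 i j), h.integral_edge hij,
    mu'_eq_mu_mul_one_sub_mu]

theorem covariance_edge_eq_zero {q r : {q : Fin n × Fin n // q.1 < q.2}} (hqr : q ≠ r) :
    cov[a q.1.1 q.1.2, a r.1.1 r.1.2; P] = 0 :=
  (h.hindep.indepFun hqr).covariance_eq_zero (h.memLp_edge _ _ 2) (h.memLp_edge _ _ 2)

theorem covariance_Ssum (t s : Fin p) :
    cov[Ssum z βs γs a t, Ssum z βs γs a s; P] =
      ∑ q : {q : Fin n × Fin n // q.1 < q.2}, mu' (linpred z βs γs q.1.1 q.1.2) *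
        covariateResidual z βs γs q.1.1 q.1.2 t * covariateResidual z βs γs q.1.1 q.1.2 s := by
  rw [Ssum_eq_sum_pairs, Ssum_eq_sum_pairs]
  refine (covariance_sum_mul_const_of_pairwise
    (X := fun (q : {q : Fin n × Fin n // q.1 < q.2}) ω =>
      a q.1.1 q.1.2 ω - mu (linpred z βs γs q.1.1 q.1.2))
    (fun q => (h.memLp_edge _ _ 2).sub (memLp_const _)) (fun q r hqr => ?_) _ _).trans
    (Finset.sum_congr rfl fun q _ => ?_)
  · dsimp only
    rw [covariance_sub_const_left ((h.memLp_edge _ _ 1).integrable le_rfl),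
      covariance_sub_const_right ((h.memLp_edge _ _ 1).integrable le_rfl),
      h.covariance_edge_eq_zero hqr]
  · rw [variance_sub_const (h.hameas _ _).aestronglyMeasurable, h.variance_edge q.2.ne]

end BetaModel

theorem beta_model_sij_covariance_general
    {Ω : Type*} [MeasurableSpace Ω] (P : Measure Ω) [IsProbabilityMeasure P]
    (n p : ℕ)
    (z : Fin n → Fin n → Fin p → ℝ) (βs : Fin n → ℝ) (γs : Fin p → ℝ)
    (a : Fin n → Fin n → Ω → ℝ)
    (hmodel : BetaModel P n p z βs γs a)
    (hV : IsUnit (Vmat z βs γs).det) :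
    ∀ t s : Fin p,
      ∫ ω, (Ssum z βs γs a t ω - ∫ ω', Ssum z βs γs a t ω' ∂P) *
          (Ssum z βs γs a s ω - ∫ ω', Ssum z βs γs a s ω' ∂P) ∂P =
        (∑ i, ∑ j ∈ univ.filter (fun j => i < j),
            mu' (linpred z βs γs i j) * z i j t * z i j s) -
          (Vgb z βs γs * (Vmat z βs γs)⁻¹ * (Vgb z βs γs)ᵀ) t s := by
  intro t s
  calc _ = cov[Ssum z βs γs a t, Ssum z βs γs a s; P] := rfl
    _ = _ := hmodel.covariance_Ssum t s
    _ = _ := by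
      have hts := congrFun (congrFun
        (sum_smul_vecMulVec_covariateResidual βs γs hmodel.hzsym hV) t) s
      simp only [Matrix.sub_apply, Matrix.sum_apply, Matrix.smul_apply, vecMulVec_apply,
        smul_eq_mul, ← mul_assoc] at hts
      rw [hts, sum_sum_filter_lt_eq_sum_subtype
        fun i j => mu' (linpred z βs γs i j) * z i j t * z i j s]

/-- the covariance matrix of `∑_{i<j} s_ij` equals
`H(β*,γ*) = ∑_{i<j} μ′(π*_ij) z_ij z_ij^⊤ − V_{γβ} V⁻¹ V_{γβ}^⊤`. -/
theorem beta_model_sij_covariance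
    {Ω : Type*} [MeasurableSpace Ω] (P : Measure Ω) [IsProbabilityMeasure P]
    (n p : ℕ) (hn : 2 ≤ n)
    (z : Fin n → Fin n → Fin p → ℝ) (βs : Fin n → ℝ) (γs : Fin p → ℝ)
    (a : Fin n → Fin n → Ω → ℝ)
    (hmodel : BetaModel P n p z βs γs a)
    (hV : IsUnit (Vmat z βs γs).det) :
    ∀ t s : Fin p,
      ∫ ω, (Ssum z βs γs a t ω - ∫ ω', Ssum z βs γs a t ω' ∂P) *
          (Ssum z βs γs a s ω - ∫ ω', Ssum z βs γs a s ω' ∂P) ∂P =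
        (∑ i, ∑ j ∈ univ.filter (fun j => i < j),
            mu' (linpred z βs γs i j) * z i j t * z i j s) -
          (Vgb z βs γs * (Vmat z βs γs)⁻¹ * (Vgb z βs γs)ᵀ) t s :=
  beta_model_sij_covariance_general P n p z βs γs a hmodel hV

end
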